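/- arXiv:1709.07118 — 3 statements merged into one kernel-verified Lean document; each statement's English description precedes it below -/
import Mathlib

section
/- Suppose the Hamiltonian eigenvalue equation $\mathcal{H}_v \Psi = E \Psi$ has the unique continuation property for potentials $v, v' \in \mathbb{V}$, and suppose the ground states $\Psi_v, \Psi_{v'}$ have equal single-particle densities $\rho^{\Psi_v} = \rho^{\Psi_{v'}}$. If, as established from the equal-density hypothesis, $\big(\sum_{i=1}^N (v'-v)(x_i) - (E(v')-E(v))\big)\Psi_v = 0$ almost everywhere on $\mathbb{R}^{3N}$, and $\Psi_v$ does not vanish identically, then $v' - v$ is constant (equal to $(E(v')-E(v))/N$) almost everywhere on any open cube $(a,b)^3$ where $\Psi_v$ is nonvanishing on the corresponding product cube. Consequently, if $v$ and $v'$ differ by more than a constant a.e. on some open cube, then $\rho^{\Psi_v} \neq \rho^{\Psi_{v'}}$. -/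
open MeasureTheory Set

lemma exists_mem_ae {β : Type*} [MeasurableSpace β] {μ : Measure β} {s : Set β} {p : β → Prop}
    (hs : μ s ≠ 0) (h : ∀ᵐ x ∂μ, p x) : ∃ x ∈ s, p x := by
  by_contra hc
  push_neg at hc
  exact hs (measure_mono_null (fun x hx => hc x hx) h)

lemma cube_ne_zero {a b : ℝ} (h : a < b) :
    volume ({y : Fin 3 → ℝ | ∀ i, y i ∈ Ioo a b}) ≠ 0 := by
  have : {y : Fin 3 → ℝ | ∀ i, y i ∈ Ioo a b} = Set.pi univ (fun _ => Ioo a b) := by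
    ext y; simp [Set.mem_pi]
  rw [this, volume_pi_pi]
  simp [Real.volume_Ioo, sub_pos, h]

lemma cubeN_ne_zero {n : ℕ} {a b : ℝ} (h : a < b) :
    volume ({x : Fin n → Fin 3 → ℝ | ∀ j, (∀ i, x j i ∈ Ioo a b)}) ≠ 0 := by
  have he : {x : Fin n → Fin 3 → ℝ | ∀ j, (∀ i, x j i ∈ Ioo a b)}
      = Set.pi univ (fun _ => {y : Fin 3 → ℝ | ∀ i, y i ∈ Ioo a b}) := by
    ext x; simp [Set.mem_pi]
  rw [he, volume_pi_pi]
  simp only [Finset.prod_const, ne_eq, pow_eq_zero_iff', not_and]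
  intro h0
  exact absurd h0 (cube_ne_zero h)

/-- **Hohenberg–Kohn theorem (abstract form, Theorem 3.4).** Let `v, v'` be locally
integrable potentials on `ℝ³` and `Ψ` the ground-state wavefunction on `ℝ^{3N}`.
If (i) `Ψ` is nonzero a.e. on a product cube `Qᴺ`, `Q = (a,b)³` (from unique
continuation), and (ii) `(∑ i, (v'-v)(x i) - c) Ψ = 0` a.e. on `ℝ^{3N}` with
`c = E(v') - E(v)`, then `v' - v = c/N` a.e. on `Q`: the potentials can differ only
by a constant on the cube. -/
theorem hohenberg_kohn (N : ℕ) (hN : 1 ≤ N) (a b c : ℝ)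
    (v v' : (Fin 3 → ℝ) → ℝ)
    (hv : LocallyIntegrable v volume) (hv' : LocallyIntegrable v' volume)
    (Ψ : (Fin N → Fin 3 → ℝ) → ℂ)
    (hΨne : ∀ᵐ x : Fin N → Fin 3 → ℝ ∂volume,
      (∀ j i, x j i ∈ Ioo a b) → Ψ x ≠ 0)
    (hid : ∀ᵐ x : Fin N → Fin 3 → ℝ ∂volume,
      (((∑ i, (v' (x i) - v (x i))) - c : ℝ) : ℂ) * Ψ x = 0) :
    ∀ᵐ y : Fin 3 → ℝ ∂volume,
      (∀ i, y i ∈ Ioo a b) → v' y - v y = c / N := by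
  rcases le_or_gt b a with hab | hab
  · -- empty cube: vacuous
    filter_upwards with y hy
    exact absurd (hy 0) (by simp [Ioo_eq_empty (not_lt.2 hab)])
  set w : (Fin 3 → ℝ) → ℝ := fun y => v' y - v y with hw
  -- Step 1: a.e. x, all coords in cube → ∑ w (x j) = c
  have H : ∀ᵐ x : Fin N → Fin 3 → ℝ ∂volume,
      (∀ j i, x j i ∈ Ioo a b) → ∑ j, w (x j) = c := by
    filter_upwards [hΨne, hid] with x h1 h2 hc
    have := (mul_eq_zero.1 h2).resolve_right (h1 hc)
    have : (∑ i, (v' (x i) - v (x i))) - c = 0 := by exact_mod_cast this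
    linarith [this]
  obtain ⟨n, rfl⟩ : ∃ n, N = n + 1 := ⟨N - 1, (Nat.succ_pred_eq_of_pos hN).symm⟩
  set e := MeasurableEquiv.piFinSuccAbove (fun _ : Fin (n + 1) => (Fin 3 → ℝ)) 0 with he
  have mp : MeasurePreserving e volume volume :=
    volume_preserving_piFinSuccAbove (fun _ : Fin (n + 1) => (Fin 3 → ℝ)) 0
  have H' : ∀ᵐ p : (Fin 3 → ℝ) × (Fin n → Fin 3 → ℝ) ∂volume,
      (∀ j i, (e.symm p) j i ∈ Ioo a b) → ∑ j, w ((e.symm p) j) = c :=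
    (MeasurePreserving.symm e mp).quasiMeasurePreserving.tendsto_ae.eventually H
  rw [Measure.volume_eq_prod] at H'
  have Hs : ∀ᵐ q : (Fin n → Fin 3 → ℝ) × (Fin 3 → ℝ) ∂((volume : Measure (Fin n → Fin 3 → ℝ)).prod volume),
      (∀ j i, (e.symm q.swap) j i ∈ Ioo a b) → ∑ j, w ((e.symm q.swap) j) = c :=
    Measure.measurePreserving_swap.quasiMeasurePreserving.tendsto_ae.eventually H'
  have Hzz := Measure.ae_ae_of_ae_prod Hs
  -- find a good z in the (n)-cube
  obtain ⟨z, hzc, hz⟩ := exists_mem_ae (cubeN_ne_zero (n := n) hab) Hzz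
  set k := c - ∑ j, w (z j) with hk
  have claimA : ∀ᵐ y : Fin 3 → ℝ ∂volume, (∀ i, y i ∈ Ioo a b) → w y = k := by
    filter_upwards [hz] with y hQ hy
    have hcoords : ∀ j i, (e.symm (z, y).swap) j i ∈ Ioo a b := by
      intro j
      rcases Fin.eq_zero_or_eq_succ j with rfl | ⟨j', rfl⟩
      · simpa [e, MeasurableEquiv.piFinSuccAbove_symm_apply,
          Fin.insertNth_apply_same] using hy
      · have hsa : (0 : Fin (n+1)).succAbove j' = j'.succ := rfl
        rw [← hsa]
        simpa [e, MeasurableEquiv.piFinSuccAbove_symm_apply,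
          Fin.insertNth_apply_succAbove] using hzc j'
    have hsum := hQ hcoords
    rw [Fin.sum_univ_succAbove (fun j => w ((e.symm (z, y).swap) j)) 0] at hsum
    simp only [e, MeasurableEquiv.piFinSuccAbove_symm_apply, Prod.swap,
      Fin.insertNthEquiv_apply, Fin.insertNth_apply_same,
      Fin.insertNth_apply_succAbove] at hsum
    rw [hk]; linarith [hsum]
  -- Step: k = c / (n+1)
  have hkval : k = c / (n + 1) := by
    have pull : ∀ j : Fin (n + 1), ∀ᵐ x : Fin (n+1) → Fin 3 → ℝ ∂volume,
        (∀ i, x j i ∈ Ioo a b) → w (x j) = k := by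
      intro j
      have : Filter.Tendsto (Function.eval j) (ae (volume : Measure (Fin (n+1) → Fin 3 → ℝ)))
          (ae (volume : Measure (Fin 3 → ℝ))) := by
        rw [volume_pi]
        exact Measure.tendsto_eval_ae_ae
      exact this.eventually claimA
    have Hall : ∀ᵐ x : Fin (n+1) → Fin 3 → ℝ ∂volume,
        ((∀ j i, x j i ∈ Ioo a b) → ∑ j, w (x j) = c) ∧
          ∀ j : Fin (n+1), (∀ i, x j i ∈ Ioo a b) → w (x j) = k := by
      exact H.and ((MeasureTheory.ae_all_iff).2 pull)
    obtain ⟨x, hxc, hx1, hx2⟩ := exists_mem_ae (cubeN_ne_zero (n := n+1) hab) Hall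
    have hsum := hx1 hxc
    have : ∑ j : Fin (n+1), w (x j) = ∑ j : Fin (n+1), k :=
      Finset.sum_congr rfl fun j _ => hx2 j (hxc j)
    rw [this, Finset.sum_const, Finset.card_univ, Fintype.card_fin] at hsum
    have hne : ((n : ℝ) + 1) ≠ 0 := by positivity
    field_simp
    rw [← hsum]
    ring
  filter_upwards [claimA] with y h hy
  have h2 := h hy
  rw [hkval] at h2
  push_cast
  exact h2
end

section
/- Let $Q = (a,b)^3$ and $N \geq 1$. If $f \in L^1(Q)$ satisfies: for every constant $c \in \mathbb{R}$, it is not the case that $f = c$ almost everywhere on $Q$ (i.e., $f$ differs from every constant on a set of positive measure), then there is no constant $C$ such that $\sum_{j=1}^N f(x_j) = C$ almost everywhere on $Q^N$. -/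
open MeasureTheory Set

/-- **Contrapositive of Lemma 2.** If `f ∈ L¹(Q)`, `Q = (a,b)³`, differs from every
constant on a set of positive measure, then there is no constant `C` with
`∑ j, f (x j) = C` a.e. on `Qᴺ`. -/
theorem no_constant_sum_of_not_ae_const (N : ℕ) (hN : 1 ≤ N) (a b : ℝ)
    (f : (Fin 3 → ℝ) → ℝ)
    (hf : IntegrableOn f (Set.univ.pi fun _ : Fin 3 => Ioo a b) volume)
    (hnc : ∀ c : ℝ, ¬ (∀ᵐ x : Fin 3 → ℝ ∂volume, (∀ i, x i ∈ Ioo a b) → f x = c)) :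
    ¬ ∃ C : ℝ, ∀ᵐ x : Fin N → Fin 3 → ℝ ∂volume,
      (∀ j i, x j i ∈ Ioo a b) → ∑ j, f (x j) = C := by
  -- First, `a < b`, otherwise `Ioo a b = ∅` and `hnc 0` is contradicted.
  have hab : a < b := by
    by_contra hab
    exact hnc 0 (Filter.Eventually.of_forall fun x hx =>
      absurd (hx 0) (by simp [Set.Ioo_eq_empty hab]))
  rintro ⟨C, hC⟩
  obtain ⟨n, rfl⟩ : ∃ n, N = n + 1 := ⟨N - 1, (Nat.succ_pred_eq_of_pos hN).symm⟩
  -- transfer to the product `E × (Fin n → (Fin 3 → ℝ))`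
  have hmp := (measurePreserving_piFinSuccAbove (fun _ : Fin (n + 1) => (volume : Measure (Fin 3 → ℝ))) 0)
  have h1 : ∀ᵐ p : (Fin 3 → ℝ) × (Fin n → (Fin 3 → ℝ)) ∂((volume : Measure (Fin 3 → ℝ)).prod (volume : Measure (Fin n → (Fin 3 → ℝ)))),
      (∀ j i, ((MeasurableEquiv.piFinSuccAbove (fun _ : Fin (n+1) => (Fin 3 → ℝ)) 0).symm p) j i ∈ Ioo a b)
        → ∑ j, f (((MeasurableEquiv.piFinSuccAbove (fun _ : Fin (n+1) => (Fin 3 → ℝ)) 0).symm p) j) = C := by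
    exact (MeasurePreserving.symm _ hmp).quasiMeasurePreserving.ae hC
  -- swap the factors
  have h2 : ∀ᵐ q : (Fin n → (Fin 3 → ℝ)) × (Fin 3 → ℝ)
      ∂((volume : Measure (Fin n → (Fin 3 → ℝ))).prod (volume : Measure (Fin 3 → ℝ))),
      (∀ j i, ((MeasurableEquiv.piFinSuccAbove (fun _ : Fin (n+1) => (Fin 3 → ℝ)) 0).symm q.swap) j i ∈ Ioo a b)
        → ∑ j, f (((MeasurableEquiv.piFinSuccAbove (fun _ : Fin (n+1) => (Fin 3 → ℝ)) 0).symm q.swap) j) = C :=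
    Measure.measurePreserving_swap.quasiMeasurePreserving.ae h1
  have h3 := Measure.ae_ae_of_ae_prod h2
  -- pick a tail `y ∈ Qⁿ` in the a.e. set
  set S : Set (Fin n → (Fin 3 → ℝ)) := Set.univ.pi fun _ : Fin n => Set.univ.pi fun _ : Fin 3 => Ioo a b
    with hS
  have hSpos : (volume : Measure (Fin n → (Fin 3 → ℝ))) S ≠ 0 := by
    have h1 : (volume : Measure (Fin n → (Fin 3 → ℝ))) S = ((ENNReal.ofReal (b - a)) ^ 3) ^ n := by
      rw [hS, volume_pi_pi]
      simp [volume_pi_pi, Real.volume_Ioo, Finset.prod_const]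
    rw [h1]
    refine pow_ne_zero _ (pow_ne_zero _ ?_)
    simp only [ne_eq, ENNReal.ofReal_eq_zero, not_le]
    linarith
  have : (S ∩ {y | ∀ᵐ x : (Fin 3 → ℝ) ∂volume,
      (∀ j i, ((MeasurableEquiv.piFinSuccAbove (fun _ : Fin (n+1) => (Fin 3 → ℝ)) 0).symm ((y, x) : (Fin n → (Fin 3 → ℝ)) × (Fin 3 → ℝ)).swap) j i ∈ Ioo a b)
        → ∑ j, f (((MeasurableEquiv.piFinSuccAbove (fun _ : Fin (n+1) => (Fin 3 → ℝ)) 0).symm ((y, x) : (Fin n → (Fin 3 → ℝ)) × (Fin 3 → ℝ)).swap) j) = C}).Nonempty := by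
    by_contra hne
    rw [Set.not_nonempty_iff_eq_empty] at hne
    have hsub : S ⊆ {y | ¬ (∀ᵐ x : (Fin 3 → ℝ) ∂volume,
      (∀ j i, ((MeasurableEquiv.piFinSuccAbove (fun _ : Fin (n+1) => (Fin 3 → ℝ)) 0).symm ((y, x) : (Fin n → (Fin 3 → ℝ)) × (Fin 3 → ℝ)).swap) j i ∈ Ioo a b)
        → ∑ j, f (((MeasurableEquiv.piFinSuccAbove (fun _ : Fin (n+1) => (Fin 3 → ℝ)) 0).symm ((y, x) : (Fin n → (Fin 3 → ℝ)) × (Fin 3 → ℝ)).swap) j) = C)} := by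
      intro y hy hP
      exact Set.eq_empty_iff_forall_notMem.mp hne y ⟨hy, hP⟩
    exact hSpos (measure_mono_null hsub h3)
  obtain ⟨y, hyS, hy⟩ := this
  -- conclude: `f = C - ∑ f(y j)` a.e. on `Q`
  refine hnc (C - ∑ j, f (y j)) ?_
  filter_upwards [hy] with x hx hxQ
  have key : ∀ j, ((MeasurableEquiv.piFinSuccAbove (fun _ : Fin (n+1) => (Fin 3 → ℝ)) 0).symm
      ((y, x) : (Fin n → (Fin 3 → ℝ)) × (Fin 3 → ℝ)).swap) j = (Fin.cons x y : Fin (n+1) → (Fin 3 → ℝ)) j := by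
    intro j
    simp only [Prod.swap, MeasurableEquiv.piFinSuccAbove_symm_apply, Fin.insertNthEquiv,
      Equiv.coe_fn_mk, Fin.insertNth_zero]
    rfl
  have hmem : ∀ j i, ((MeasurableEquiv.piFinSuccAbove (fun _ : Fin (n+1) => (Fin 3 → ℝ)) 0).symm
      ((y, x) : (Fin n → (Fin 3 → ℝ)) × (Fin 3 → ℝ)).swap) j i ∈ Ioo a b := by
    intro j
    rw [key]
    refine Fin.cases ?_ ?_ j
    · exact hxQ
    · intro k
      exact fun i => hyS k (Set.mem_univ k) i (Set.mem_univ i)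
  have := hx hmem
  rw [Finset.sum_congr rfl (fun j _ => congrArg f (key j)), Fin.sum_univ_succ] at this
  simp only [Fin.cons_zero, Fin.cons_succ] at this
  linarith
end

section
/- Let $\mu$ be a $\sigma$-finite measure on a measurable space $X$, $N \geq 1$, and $f : X \to \mathbb{R}$ measurable. If $\sum_{j=1}^N f(x_j) = C$ for $\mu^{\otimes N}$-almost every $(x_1,\dots,x_N) \in X^N$ and $\mu(X) > 0$, then $f = C/N$ $\mu$-almost everywhere on $X$. -/
open MeasureTheory

/-- **Abstract multivariable identity lemma.** If `μ` is a σ-finite measure with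
`μ(X) > 0`, `f` measurable, and `∑ j, f (x j) = C` for `μ^⊗N`-a.e.
`(x₁,…,x_N) ∈ Xᴺ`, then `f = C/N` `μ`-a.e. -/
theorem abstract_multivariable_identity {X : Type*} [MeasurableSpace X]
    (μ : Measure X) [SigmaFinite μ] (hμ : 0 < μ Set.univ)
    (N : ℕ) (hN : 1 ≤ N) (f : X → ℝ) (hf : Measurable f) (C : ℝ)
    (h : ∀ᵐ x : Fin N → X ∂(Measure.pi fun _ : Fin N => μ), ∑ j, f (x j) = C) :
    ∀ᵐ x ∂μ, f x = C / N := by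
  obtain ⟨n, rfl⟩ : ∃ n, N = n + 1 := ⟨N - 1, (Nat.succ_pred_eq_of_pos hN).symm⟩
  set ν : Measure (Fin n → X) := Measure.pi fun _ : Fin n => μ with hν
  set π : Measure (Fin (n + 1) → X) := Measure.pi fun _ : Fin (n + 1) => μ with hπ
  have hπ0 : π ≠ 0 := by
    rw [← Measure.measure_univ_ne_zero, hπ, Measure.pi_univ]
    simp only [Finset.prod_const]
    exact pow_ne_zero _ hμ.ne'
  have hν0 : ν ≠ 0 := by
    rw [← Measure.measure_univ_ne_zero, hν, Measure.pi_univ]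
    simp only [Finset.prod_const]
    exact pow_ne_zero _ hμ.ne'
  have hmp := measurePreserving_piFinSuccAbove (fun _ : Fin (n + 1) => μ) 0
  -- transport `h` to the product `μ.prod ν`
  have h2 : ∀ᵐ p : X × (Fin n → X) ∂(μ.prod ν),
      f p.1 + ∑ j, f (p.2 j) = C := by
    rw [← hmp.map_eq,
      (MeasurableEquiv.piFinSuccAbove (fun _ : Fin (n + 1) => X)
        0).measurableEmbedding.ae_map_iff]
    filter_upwards [h] with x hx
    rw [← hx, Fin.sum_univ_succAbove (fun j => f (x j)) 0]
    rfl
  -- Fubini: for ν-a.e. y, f x = C - ∑ f (y j) for μ-a.e. x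
  have h3 : ∀ᵐ y ∂ν, ∀ᵐ x ∂μ, f x = C - ∑ j, f (y j) := by
    have h2' : ∀ᵐ p : (Fin n → X) × X ∂(ν.prod μ),
        f p.2 + ∑ j, f (p.1 j) = C :=
      (Measure.measurePreserving_swap).quasiMeasurePreserving.ae h2
    filter_upwards [Measure.ae_ae_of_ae_prod h2'] with y hy
    filter_upwards [hy] with x hx
    linarith
  -- pick a good `y` : `f` is a.e. constant
  haveI : (ae ν).NeBot := ae_neBot.2 hν0
  obtain ⟨y, hy⟩ := h3.exists
  set k : ℝ := C - ∑ j, f (y j) with hk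
  -- each coordinate is a.e. equal to `k` w.r.t. `π`
  have h4 : ∀ᵐ x : Fin (n + 1) → X ∂π, ∀ j, f (x j) = k := by
    rw [ae_all_iff]
    intro j
    exact (Measure.tendsto_eval_ae_ae (μ := fun _ : Fin (n + 1) => μ) (i := j)).eventually hy
  -- hence `(n+1) * k = C`
  haveI : (ae π).NeBot := ae_neBot.2 hπ0
  obtain ⟨x, hx1, hx2⟩ := (h.and h4).exists
  have hkC : (n + 1 : ℝ) * k = C := by
    have : ∑ j, f (x j) = (n + 1 : ℝ) * k := by
      rw [Finset.sum_congr rfl fun j _ => hx2 j]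
      simp [mul_comm]
    linarith [this ▸ hx1]
  filter_upwards [hy] with z hz
  rw [hz]
  have hN' : ((n : ℝ) + 1) ≠ 0 := by positivity
  push_cast
  field_simp at hkC ⊢
  linarith
end
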